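/- arXiv:2502.18677 — 5 statements merged into one kernel-verified Lean document; each statement's English description precedes it below -/
import Mathlib

section
/- The function q₀ defined by q₀(x) = -2 d²/dx² log{1 + a(sin 2x - 2x)} for x < 0 and q₀(x) = 0 for x ≥ 0, with a > 0, satisfies q₀(x) = -4 sin(2x)/x + O(1/x²) as x → -∞. -/
noncomputable def q0 (a : ℝ) : ℝ → ℝ := fun x =>
  if x < 0 then
    -2 * deriv (deriv (fun y : ℝ => Real.log (1 + a * (Real.sin (2 * y) - 2 * y)))) x
  else 0

/-!
With `τ(x) = 1 + a (sin 2x - 2x)` we have `q₀ = -2 (log τ)'' = -2 τ''/τ + 2 τ'²/τ²` on `x < 0`,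
where `τ' = a (2 cos 2x - 2)` and `τ'' = -4a sin 2x`. For `x ≤ -1` the secular term dominates:
`τ(x) ≥ 1 - a x ≥ a |x|`. Since `-2τ'' + 4 sin(2x) τ / x = 4 sin(2x) (1 + a sin 2x) / x`, the
difference `q₀(x) + 4 sin(2x)/x` is `4 sin(2x) (1 + a sin 2x) / (τ x) + 2 τ'²/τ²`, and both terms are
`O(1/x²)` because `|τ x| ≥ a x²` while `τ'` stays bounded.
-/

open Real Filter Topology

theorem deriv_deriv_log_eq {f f' : ℝ → ℝ} {f'' x : ℝ}
    (hf : ∀ᶠ y in 𝓝 x, HasDerivAt f (f' y) y ∧ f y ≠ 0) (hf' : HasDerivAt f' f'' x) :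
    deriv (deriv fun y => log (f y)) x = (f'' * f x - f' x ^ 2) / f x ^ 2 := by
  have hlog : deriv (fun y => log (f y)) =ᶠ[𝓝 x] fun y => f' y / f y :=
    hf.mono fun y ⟨hfy, hy⟩ => (hfy.log hy).deriv
  obtain ⟨hfx, hx⟩ := hf.self_of_nhds
  rw [hlog.deriv_eq, (hf'.fun_div hfx hx).deriv]
  ring

namespace Q0

noncomputable def tau (a x : ℝ) : ℝ := 1 + a * (sin (2 * x) - 2 * x)

theorem hasDerivAt_tau (a x : ℝ) : HasDerivAt (tau a) (a * (2 * cos (2 * x) - 2)) x := by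
  have h2 : HasDerivAt (fun y : ℝ => 2 * y) 2 x := by simpa using (hasDerivAt_id x).const_mul 2
  exact (((h2.sin.fun_sub h2).const_mul a).const_add 1).congr_deriv (by ring)

theorem hasDerivAt_deriv_tau (a x : ℝ) :
    HasDerivAt (fun y => a * (2 * cos (2 * y) - 2)) (-4 * a * sin (2 * x)) x := by
  have h2 : HasDerivAt (fun y : ℝ => 2 * y) 2 x := by simpa using (hasDerivAt_id x).const_mul 2
  exact (((h2.cos.const_mul 2).sub_const 2).const_mul a).congr_deriv (by ring)

theorem one_le_tau {a x : ℝ} (ha : 0 ≤ a) (hx : x ≤ 0) : 1 ≤ tau a x := by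
  have := le_sin (x := 2 * x) (by linarith)
  unfold tau
  nlinarith

theorem one_sub_mul_le_tau {a x : ℝ} (ha : 0 ≤ a) (hx : x ≤ -1) : 1 - a * x ≤ tau a x := by
  have := neg_one_le_sin (2 * x)
  unfold tau
  nlinarith

theorem deriv_deriv_log_tau {a x : ℝ} (ha : 0 ≤ a) (hx : x < 0) :
    deriv (deriv fun y => log (tau a y)) x
      = (-4 * a * sin (2 * x) * tau a x - (a * (2 * cos (2 * x) - 2)) ^ 2) / tau a x ^ 2 := by
  refine deriv_deriv_log_eq ?_ (hasDerivAt_deriv_tau a x)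
  filter_upwards [Iio_mem_nhds hx] with y hy
  exact ⟨hasDerivAt_tau a y, (one_pos.trans_le (one_le_tau ha hy.le)).ne'⟩

theorem q0_sub_leading_term_eq {a x : ℝ} (ha : 0 ≤ a) (hx : x < 0) :
    q0 a x - (-4 * sin (2 * x) / x)
      = 4 * sin (2 * x) * (1 + a * sin (2 * x)) / (tau a x * x)
        + 2 * (a * (2 * cos (2 * x) - 2)) ^ 2 / tau a x ^ 2 := by
  have hτ : tau a x ≠ 0 := (one_pos.trans_le (one_le_tau ha hx.le)).ne'
  have hq : q0 a x = -2 * deriv (deriv fun y => log (tau a y)) x := if_pos hx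
  rw [hq, deriv_deriv_log_tau ha hx]
  field_simp [hx.ne]
  unfold tau
  ring

theorem abs_sin_mul_div_tau_le {a x : ℝ} (ha : 0 < a) (hx : x ≤ -1) :
    |4 * sin (2 * x) * (1 + a * sin (2 * x)) / (tau a x * x)| ≤ 4 * (1 + a) / a / x ^ 2 := by
  have hτ := one_sub_mul_le_tau ha.le hx
  obtain ⟨hsin, hsin'⟩ := abs_le.mp (abs_sin_le_one (2 * x))
  have hnum : |4 * sin (2 * x) * (1 + a * sin (2 * x))| ≤ 4 * (1 + a) := by
    have hsq : sin (2 * x) ^ 2 ≤ 1 := by nlinarith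
    rw [abs_le]
    constructor
    · nlinarith [mul_nonneg ha.le (sq_nonneg (sin (2 * x)))]
    · nlinarith [mul_le_mul_of_nonneg_left hsq ha.le]
  have hden : a * x ^ 2 ≤ |tau a x * x| := by
    rw [abs_mul, abs_of_pos (by nlinarith), abs_of_neg (by linarith)]
    nlinarith
  rw [abs_div, div_div]
  exact div_le_div₀ (by positivity) hnum (mul_pos ha (by nlinarith)) hden

theorem sq_deriv_tau_div_sq_tau_le {a x : ℝ} (ha : 0 < a) (hx : x ≤ -1) :
    2 * (a * (2 * cos (2 * x) - 2)) ^ 2 / tau a x ^ 2 ≤ 32 / x ^ 2 := by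
  have hτ := one_sub_mul_le_tau ha.le hx
  have hcos : (2 * cos (2 * x) - 2) ^ 2 ≤ 16 := by
    nlinarith [neg_one_le_cos (2 * x), cos_le_one (2 * x)]
  have hnum : 2 * (a * (2 * cos (2 * x) - 2)) ^ 2 ≤ 32 * a ^ 2 := by
    rw [mul_pow]
    nlinarith [sq_nonneg a]
  have hden : (a * x) ^ 2 ≤ tau a x ^ 2 := by
    rw [← neg_sq]
    exact pow_le_pow_left₀ (by nlinarith) (by linarith) 2
  calc 2 * (a * (2 * cos (2 * x) - 2)) ^ 2 / tau a x ^ 2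
      ≤ 32 * a ^ 2 / (a * x) ^ 2 := by
        have hax : a * x < 0 := mul_neg_of_pos_of_neg ha (by linarith)
        exact div_le_div₀ (by positivity) hnum (sq_pos_of_neg hax) hden
    _ = 32 / x ^ 2 := by field_simp

end Q0

open Q0 in
/-- `q₀(x) = -4 sin(2x)/x + O(1/x²)` as `x → -∞`. -/
theorem q0_asymptotics (a : ℝ) (ha : 0 < a) :
    ∃ C X : ℝ, ∀ x : ℝ, x ≤ X →
      |q0 a x - (-4 * Real.sin (2 * x) / x)| ≤ C / x ^ 2 := by
  refine ⟨4 * (1 + a) / a + 32, -1, fun x hx => ?_⟩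
  rw [q0_sub_leading_term_eq ha.le (by linarith), add_div]
  refine (abs_add_le _ _).trans (add_le_add (abs_sin_mul_div_tau_le ha hx) ?_)
  rw [abs_of_nonneg (by positivity)]
  exact sq_deriv_tau_div_sq_tau_le ha hx
end

section
/- For a > 0, the function q₀(x) = -2 d²/dx² log{1 + a(sin 2x - 2x)} for x < 0 (and 0 for x ≥ 0) belongs to L²(ℝ) but not to L¹(ℝ). -/
/-!
On `x < 0` put `F x = logArg a x = 1 + a (sin 2x - 2x)`; then `F ≥ 1` (as `sin t ≥ t` for
`t ≤ 0`), `F` grows linearly, `|F'| ≤ 4a`, and `q₀ = 8a sin 2x / F + 2 (F' / F)²`. Hence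
`|q₀| ≲ 1 / F`, which is square integrable. Since the second term is nonnegative, on each
interval `(nπ, nπ + π/2]`, `n = -1, -2, …`, where `sin 2x ≥ 0`, we have
`q₀ ≥ 8a sin 2x / F ≳ sin 2x / |n|`, so these intervals contribute a harmonic series to `∫ |q₀|`.
-/

open MeasureTheory

open Real Set Topology Function

theorem deriv_deriv_log_comp {f f' : ℝ → ℝ} {f'' x : ℝ}
    (hf : ∀ᶠ y in 𝓝 x, HasDerivAt f (f' y) y ∧ f y ≠ 0) (hf' : HasDerivAt f' f'' x) :
    deriv (deriv fun y => log (f y)) x = f'' / f x - (f' x / f x) ^ 2 := by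
  have hderiv : deriv (fun y => log (f y)) =ᶠ[𝓝 x] fun y => f' y / f y :=
    hf.mono fun y hy => (hy.1.log hy.2).deriv
  obtain ⟨hfx, hx0⟩ := hf.self_of_nhds
  rw [hderiv.deriv_eq]
  exact (hf'.div hfx hx0).deriv.trans (by field_simp)

theorem not_integrable_of_not_summable_setIntegral {α E : Type*} [MeasurableSpace α]
    [NormedAddCommGroup E] {μ : Measure α} {f : α → E} {g : ℕ → α → ℝ} {s : ℕ → Set α}
    (hs : ∀ k, MeasurableSet (s k)) (hd : Pairwise (Disjoint on s))
    (hg : ∀ k, IntegrableOn (g k) (s k) μ) (hg0 : ∀ k, ∀ x ∈ s k, 0 ≤ g k x)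
    (hgf : ∀ k, ∀ x ∈ s k, g k x ≤ ‖f x‖)
    (hsum : ¬ Summable fun k => ∫ x in s k, g k x ∂μ) : ¬ Integrable f μ := fun hf =>
  hsum <| Summable.of_nonneg_of_le (fun k => setIntegral_nonneg (hs k) (hg0 k))
    (fun k => setIntegral_mono_on (hg k) hf.norm.integrableOn (hs k) (hgf k))
    (hasSum_integral_iUnion hs hd hf.norm.integrableOn).summable

theorem not_summable_div_nat_add_one {c : ℝ} (hc : c ≠ 0) :
    ¬ Summable fun k : ℕ => c / (k + 1) := by
  intro h
  apply Real.not_summable_one_div_natCast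
  rw [← summable_nat_add_iff 1]
  refine (h.mul_left c⁻¹).congr fun k => ?_
  push_cast
  field_simp

theorem sin_two_mul_nonneg_of_mem_Ioc {n : ℤ} {x : ℝ} (hx : x ∈ Ioc (n * π) (n * π + π / 2)) :
    0 ≤ sin (2 * x) := by
  rw [← sin_sub_int_mul_two_pi (2 * x) n]
  obtain ⟨h1, h2⟩ := hx
  apply sin_nonneg_of_nonneg_of_le_pi <;> linarith

theorem integral_sin_two_mul_Ioc (n : ℤ) :
    ∫ x in Ioc (n * π) (n * π + π / 2), sin (2 * x) = 1 := by
  rw [← intervalIntegral.integral_of_le (by linarith [pi_pos]),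
    intervalIntegral.integral_comp_mul_left (fun x => sin x) two_ne_zero, integral_sin,
    show 2 * (n * π) = n * (2 * π) by ring, show 2 * (n * π + π / 2) = n * (2 * π) + π by ring,
    cos_int_mul_two_pi, cos_int_mul_two_pi_add_pi]
  norm_num

noncomputable def logArg (a x : ℝ) : ℝ := 1 + a * (sin (2 * x) - 2 * x)

theorem hasDerivAt_logArg (a x : ℝ) : HasDerivAt (logArg a) (2 * a * (cos (2 * x) - 1)) x := by
  have h2x : HasDerivAt (fun y : ℝ => 2 * y) 2 x := by simpa using (hasDerivAt_id x).const_mul 2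
  exact (((h2x.sin.sub h2x).const_mul a).const_add 1).congr_deriv (by ring)

theorem hasDerivAt_deriv_logArg (a x : ℝ) :
    HasDerivAt (fun y => 2 * a * (cos (2 * y) - 1)) (-(4 * a * sin (2 * x))) x := by
  have h2x : HasDerivAt (fun y : ℝ => 2 * y) 2 x := by simpa using (hasDerivAt_id x).const_mul 2
  exact ((h2x.cos.sub_const 1).const_mul (2 * a)).congr_deriv (by ring)

theorem measurable_q0 (a : ℝ) : Measurable (q0 a) :=
  Measurable.ite measurableSet_Iio ((measurable_deriv _).const_mul _) measurable_const

section

variable {a x : ℝ}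

theorem one_le_logArg (ha : 0 ≤ a) (hx : x ≤ 0) : 1 ≤ logArg a x := by
  have := le_sin (show 2 * x ≤ 0 by linarith)
  unfold logArg
  nlinarith

theorem logArg_le (ha : 0 ≤ a) (x : ℝ) : logArg a x ≤ 1 + a - 2 * a * x := by
  have := sin_le_one (2 * x)
  unfold logArg
  nlinarith

theorem sub_le_logArg (ha : 0 ≤ a) (x : ℝ) : 1 - a - 2 * a * x ≤ logArg a x := by
  have := neg_one_le_sin (2 * x)
  unfold logArg
  nlinarith

theorem sq_mul_one_add_sq_le_logArg_sq (ha : 0 ≤ a) (hx : x ≤ 0) :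
    a ^ 2 * (1 + x ^ 2) ≤ (1 + 2 * a ^ 2) * logArg a x ^ 2 := by
  have h1 := one_le_logArg ha hx
  rcases le_or_gt x (-1) with hx1 | hx1
  · have h2 : a * -x ≤ logArg a x := by nlinarith [sub_le_logArg ha x]
    have h3 : (a * -x) ^ 2 ≤ logArg a x ^ 2 := pow_le_pow_left₀ (by nlinarith) h2 2
    nlinarith [mul_le_mul_of_nonneg_left (one_le_pow₀ h1 : 1 ≤ logArg a x ^ 2) (sq_nonneg a)]
  · have h2 : x ^ 2 ≤ 1 := by nlinarith
    nlinarith [mul_le_mul_of_nonneg_left (one_le_pow₀ h1 : 1 ≤ logArg a x ^ 2) (sq_nonneg a),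
      mul_le_mul_of_nonneg_left h2 (sq_nonneg a)]

theorem q0_of_neg (ha : 0 ≤ a) (hx : x < 0) :
    q0 a x = 8 * a * sin (2 * x) / logArg a x
      + 2 * (2 * a * (cos (2 * x) - 1) / logArg a x) ^ 2 := by
  have hf : ∀ᶠ y in 𝓝 x, HasDerivAt (logArg a) (2 * a * (cos (2 * y) - 1)) y ∧ logArg a y ≠ 0 := by
    filter_upwards [Iio_mem_nhds hx] with y hy
    exact ⟨hasDerivAt_logArg a y, (zero_lt_one.trans_le (one_le_logArg ha (le_of_lt hy))).ne'⟩
  have h := deriv_deriv_log_comp hf (hasDerivAt_deriv_logArg a x)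
  rw [q0, if_pos hx]
  unfold logArg at h ⊢
  rw [h]
  ring

theorem mul_sin_div_logArg_le_q0 (ha : 0 ≤ a) (hx : x < 0) :
    8 * a * sin (2 * x) / logArg a x ≤ q0 a x := by
  rw [q0_of_neg ha hx]
  exact le_add_of_nonneg_right (by positivity)

theorem abs_q0_le (ha : 0 ≤ a) (hx : x < 0) :
    |q0 a x| ≤ (8 * a + 32 * a ^ 2) / logArg a x := by
  have hf := one_le_logArg ha hx.le
  have hsin : |8 * a * sin (2 * x)| ≤ 8 * a := by
    rw [abs_mul, abs_of_nonneg (by positivity : 0 ≤ 8 * a)]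
    exact mul_le_of_le_one_right (by positivity) (abs_sin_le_one _)
  have hcos : (2 * a * (cos (2 * x) - 1)) ^ 2 ≤ 16 * a ^ 2 := by
    have : (cos (2 * x) - 1) ^ 2 ≤ 4 := by nlinarith [neg_one_le_cos (2 * x), cos_le_one (2 * x)]
    calc (2 * a * (cos (2 * x) - 1)) ^ 2 = 4 * a ^ 2 * (cos (2 * x) - 1) ^ 2 := by ring
      _ ≤ 4 * a ^ 2 * 4 := by gcongr
      _ = 16 * a ^ 2 := by ring
  rw [q0_of_neg ha hx, div_pow, add_div]
  refine (abs_add_le _ _).trans (add_le_add ?_ ?_)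
  · rw [abs_div, abs_of_pos (by linarith : 0 < logArg a x)]
    gcongr
  · rw [abs_of_nonneg (by positivity), mul_div_assoc', div_le_div_iff₀ (by positivity) (by linarith)]
    nlinarith [mul_le_mul hcos (show logArg a x ≤ logArg a x ^ 2 by nlinarith) (by linarith)
      (by positivity)]

theorem sq_q0_le (ha : 0 < a) (x : ℝ) :
    q0 a x ^ 2 ≤ (1 + 2 * a ^ 2) * (8 * a + 32 * a ^ 2) ^ 2 / a ^ 2 * (1 + x ^ 2)⁻¹ := by
  rcases lt_or_ge x 0 with hx | hx
  · have hf : 0 < logArg a x := zero_lt_one.trans_le (one_le_logArg ha.le hx.le)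
    have hq : (q0 a x * logArg a x) ^ 2 ≤ (8 * a + 32 * a ^ 2) ^ 2 := by
      rw [sq_le_sq, abs_mul, abs_of_pos hf,
        abs_of_nonneg (by positivity : (0 : ℝ) ≤ 8 * a + 32 * a ^ 2)]
      exact (le_div_iff₀ hf).1 (abs_q0_le ha.le hx)
    rw [← div_eq_mul_inv, le_div_iff₀ (by positivity), le_div_iff₀ (by positivity)]
    calc q0 a x ^ 2 * (1 + x ^ 2) * a ^ 2 = q0 a x ^ 2 * (a ^ 2 * (1 + x ^ 2)) := by ring
      _ ≤ q0 a x ^ 2 * ((1 + 2 * a ^ 2) * logArg a x ^ 2) :=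
          mul_le_mul_of_nonneg_left (sq_mul_one_add_sq_le_logArg_sq ha.le hx.le) (sq_nonneg _)
      _ = (1 + 2 * a ^ 2) * (q0 a x * logArg a x) ^ 2 := by ring
      _ ≤ (1 + 2 * a ^ 2) * (8 * a + 32 * a ^ 2) ^ 2 := by gcongr
  · rw [q0, if_neg hx.not_gt, sq, zero_mul]
    positivity

theorem memLp_two_q0 (ha : 0 < a) : MemLp (q0 a) 2 volume := by
  rw [memLp_two_iff_integrable_sq (measurable_q0 a).aestronglyMeasurable]
  exact (integrable_inv_one_add_sq.const_mul _).mono'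
    ((measurable_q0 a).pow_const 2).aestronglyMeasurable
    (ae_of_all _ fun x => (norm_of_nonneg (sq_nonneg _)).trans_le (sq_q0_le ha x))

theorem div_mul_sin_two_mul_le_norm_q0 (ha : 0 < a) {k : ℕ}
    (hx : x ∈ Ioc ((-(k + 1) : ℤ) * π) ((-(k + 1) : ℤ) * π + π / 2)) :
    8 * a / (1 + a + 2 * a * π) / (k + 1) * sin (2 * x) ≤ ‖q0 a x‖ := by
  have hsin := sin_two_mul_nonneg_of_mem_Ioc hx
  have hk : (0 : ℝ) ≤ k := k.cast_nonneg
  obtain ⟨hlo, hhi⟩ := hx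
  push_cast at hlo hhi
  have hx0 : x < 0 := by nlinarith [pi_pos]
  have hf : logArg a x ≤ (1 + a + 2 * a * π) * (k + 1) := by
    nlinarith [logArg_le ha.le x, pi_pos]
  calc 8 * a / (1 + a + 2 * a * π) / (k + 1) * sin (2 * x)
      ≤ 8 * a / logArg a x * sin (2 * x) := by
        refine mul_le_mul_of_nonneg_right ?_ hsin
        rw [div_div]
        exact div_le_div_of_nonneg_left (by positivity)
          (zero_lt_one.trans_le (one_le_logArg ha.le hx0.le)) hf
    _ = 8 * a * sin (2 * x) / logArg a x := by ring
    _ ≤ q0 a x := mul_sin_div_logArg_le_q0 ha.le hx0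
    _ ≤ ‖q0 a x‖ := le_norm_self _

theorem not_integrable_q0 (ha : 0 < a) : ¬ Integrable (q0 a) volume := by
  refine not_integrable_of_not_summable_setIntegral
    (s := fun k : ℕ => Ioc ((-(k + 1) : ℤ) * π) ((-(k + 1) : ℤ) * π + π / 2))
    (g := fun k x => 8 * a / (1 + a + 2 * a * π) / (k + 1) * sin (2 * x))
    (fun _ => measurableSet_Ioc) ?_ (fun _ => (by fun_prop : Continuous _).integrableOn_Ioc)
    (fun k x hx => mul_nonneg (by positivity) (sin_two_mul_nonneg_of_mem_Ioc hx))
    (fun k x hx => div_mul_sin_two_mul_le_norm_q0 ha hx) ?_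
  · rw [pairwise_disjoint_on]
    intro j k hjk
    refine (Ioc_disjoint_Ioc_of_le ?_).symm
    have : (j : ℝ) + 1 ≤ k := by exact_mod_cast hjk
    push_cast
    nlinarith [pi_pos]
  · simp_rw [integral_const_mul, integral_sin_two_mul_Ioc, mul_one]
    exact not_summable_div_nat_add_one (by positivity)

end

/-- `q₀ ∈ L²(ℝ)` but `q₀ ∉ L¹(ℝ)`. -/
theorem q0_L2_not_L1 (a : ℝ) (ha : 0 < a) :
    MemLp (q0 a) 2 volume ∧ ¬ Integrable (q0 a) volume :=
  ⟨memLp_two_q0 ha, not_integrable_q0 ha⟩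
end

section
/- For a > 0 and κ > 0 with κ³ + κ = 2a, the reflection coefficient R(k) = i(κ³+κ)/((k+iκ)(k-k₋)(k-k₊)), with k± = ±√(1+3κ²/4) - iκ/2, satisfies |R(k)| < 1 for all real k ≠ ±1, 0, and |R(±1)| = 1. -/
open Complex

/-! Using `k₊ + k₋ = -iκ` and `k₊ k₋ = -(1 + κ²)`, the denominator of `R` expands to
`k³ - (2κ² + 1)k + iκ(2k² - κ² - 1)`, whose squared modulus at real `k` is
`(κ³ + κ)² + (k(k² - 1))²`. Hence `|R(k)|² = N² / (N² + (k(k² - 1))²)` with `N = κ³ + κ ≠ 0`,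
which is `< 1` unless `k ∈ {0, ±1}` and equals `1` at `k = ±1`. -/

theorem reflection_denominator_eq (κ s : ℝ) (hs : s ^ 2 = 1 + 3 * κ ^ 2 / 4) (z : ℂ) :
    (z + I * κ) * (z - (-(s : ℂ) - I * κ / 2)) * (z - ((s : ℂ) - I * κ / 2)) =
      z ^ 3 - (2 * κ ^ 2 + 1) * z + I * κ * (2 * z ^ 2 - κ ^ 2 - 1) := by
  have hs' : (s : ℂ) ^ 2 = 1 + 3 * (κ : ℂ) ^ 2 / 4 := by exact_mod_cast hs
  linear_combination (-(z + I * κ)) * hs' + (5 / 4 * z * (κ : ℂ) ^ 2 + I * (κ : ℂ) ^ 3 / 4) * I_sq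

theorem normSq_reflection_denominator (κ k : ℝ) :
    normSq ((k : ℂ) ^ 3 - (2 * κ ^ 2 + 1) * k + I * κ * (2 * k ^ 2 - κ ^ 2 - 1)) =
      (κ ^ 3 + κ) ^ 2 + (k * (k ^ 2 - 1)) ^ 2 := by
  have : (k : ℂ) ^ 3 - (2 * κ ^ 2 + 1) * k + I * κ * (2 * k ^ 2 - κ ^ 2 - 1) =
      ((k ^ 3 - (2 * κ ^ 2 + 1) * k : ℝ) : ℂ) + ((κ * (2 * k ^ 2 - κ ^ 2 - 1) : ℝ) : ℂ) * I := by
    push_cast; ring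
  rw [this, normSq_add_mul_I]
  ring

theorem reflection_coefficient_modulus_general (κ : ℝ) (hκ : 0 < κ)
    (kp km : ℂ)
    (hkp : kp = (Real.sqrt (1 + 3 * κ ^ 2 / 4) : ℂ) - I * κ / 2)
    (hkm : km = -(Real.sqrt (1 + 3 * κ ^ 2 / 4) : ℂ) - I * κ / 2)
    (R : ℝ → ℂ)
    (hR : ∀ k : ℝ, R k =
      I * ((κ : ℂ) ^ 3 + κ) / (((k : ℂ) + I * κ) * ((k : ℂ) - km) * ((k : ℂ) - kp))) :
    (∀ k : ℝ, k ≠ 1 → k ≠ -1 → k ≠ 0 → ‖R k‖ < 1) ∧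
      ‖R 1‖ = 1 ∧ ‖R (-1)‖ = 1 := by
  have hN : (κ ^ 3 + κ) ^ 2 ≠ 0 := by positivity
  have hsq : ∀ k : ℝ, ‖R k‖ ^ 2 = (κ ^ 3 + κ) ^ 2 / ((κ ^ 3 + κ) ^ 2 + (k * (k ^ 2 - 1)) ^ 2) := by
    intro k
    have hs := Real.sq_sqrt (by positivity : (0 : ℝ) ≤ 1 + 3 * κ ^ 2 / 4)
    rw [Complex.sq_norm, hR, hkp, hkm, reflection_denominator_eq κ _ hs, map_div₀, map_mul,
      normSq_I, one_mul, normSq_reflection_denominator, ← ofReal_pow, ← ofReal_add, normSq_ofReal,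
      ← sq]
  have norm_eq_one : ∀ k : ℝ, k ^ 2 = 1 → ‖R k‖ = 1 := fun k hk ↦ by
    rw [← pow_eq_one_iff_of_nonneg (norm_nonneg _) two_ne_zero, hsq, hk]
    simp [hN]
  refine ⟨fun k h1 hm1 h0 ↦ ?_, norm_eq_one 1 (by norm_num), norm_eq_one (-1) (by norm_num)⟩
  have hk : k * (k ^ 2 - 1) ≠ 0 := by
    have : k ^ 2 ≠ 1 := by simp [sq_eq_one_iff, h1, hm1]
    exact mul_ne_zero h0 (sub_ne_zero.mpr this)
  rw [← sq_lt_one_iff₀ (norm_nonneg _), hsq, div_lt_one (by positivity)]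
  exact lt_add_of_pos_right _ (by positivity)

/-- The reflection coefficient satisfies `|R(k)| < 1` for real `k ≠ ±1, 0`
and `|R(±1)| = 1`. -/
theorem reflection_coefficient_modulus (a κ : ℝ) (ha : 0 < a) (hκ : 0 < κ)
    (hrel : κ ^ 3 + κ = 2 * a)
    (kp km : ℂ)
    (hkp : kp = (Real.sqrt (1 + 3 * κ ^ 2 / 4) : ℂ) - I * κ / 2)
    (hkm : km = -(Real.sqrt (1 + 3 * κ ^ 2 / 4) : ℂ) - I * κ / 2)
    (R : ℝ → ℂ)
    (hR : ∀ k : ℝ, R k =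
      I * ((κ : ℂ) ^ 3 + κ) / (((k : ℂ) + I * κ) * ((k : ℂ) - km) * ((k : ℂ) - kp))) :
    (∀ k : ℝ, k ≠ 1 → k ≠ -1 → k ≠ 0 → ‖R k‖ < 1) ∧
      ‖R 1‖ = 1 ∧ ‖R (-1)‖ = 1 :=
  reflection_coefficient_modulus_general κ hκ kp km hkp hkm R hR
end

section
/- For a > 0 and κ > 0 with κ³ + κ = 2a, the transmission coefficient T(k) = (k³-k)/((k+iκ)(k-k₋)(k-k₊)) with k± = ±√(1+3κ²/4) - iκ/2 satisfies T(1) = 0 and |T'(1)| = 1/a. -/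
open Complex

/-
Write `T = N / D` with `N k = k³ - k` and `D k = (k + iκ)(k - k₋)(k - k₊)`. Since `k₊` and `k₋` are
the roots of `k² + iκk - (1 + κ²)`, `D 1 = (1 + iκ) · iκ(1 + iκ) = iκ(1 + iκ)² ≠ 0`. As `N 1 = 0`,
the quotient rule reduces to `T'(1) = N'(1) / D(1) = 2 / (iκ(1 + iκ)²)`, whose modulus is
`2 / (κ(1 + κ²)) = 1 / a`.
-/

theorem HasDerivAt.div_of_apply_eq_zero {𝕜 : Type*} [NontriviallyNormedField 𝕜] {f g : 𝕜 → 𝕜}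
    {f' x : 𝕜} (hf : HasDerivAt f f' x) (hg : DifferentiableAt 𝕜 g x) (hfx : f x = 0)
    (hgx : g x ≠ 0) : HasDerivAt (fun y => f y / g y) (f' / g x) x := by
  have h := hf.div hg.hasDerivAt hgx
  rwa [hfx, zero_mul, sub_zero, sq, mul_div_mul_right _ _ hgx] at h

theorem sub_mul_sub_eq_of_sq_eq (κ s k : ℂ) (hs : s ^ 2 = 1 + 3 * κ ^ 2 / 4) :
    (k - (-s - I * κ / 2)) * (k - (s - I * κ / 2)) = k ^ 2 + I * κ * k - (1 + κ ^ 2) := by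
  linear_combination (-1 : ℂ) * hs + (κ ^ 2 / 4) * I_sq

theorem norm_I_mul_mul_one_add_I_mul_sq (κ : ℝ) :
    ‖I * κ * (1 + I * κ) ^ 2‖ = |κ| * (1 + κ ^ 2) := by
  rw [norm_mul, norm_mul, norm_I, norm_real, Real.norm_eq_abs, norm_pow, ← normSq_eq_norm_sq,
    mul_comm I, ← ofReal_one, normSq_add_mul_I]
  ring

theorem transmission_zero_and_derivative_general (a κ : ℝ) (hκ : 0 < κ)
    (hrel : κ ^ 3 + κ = 2 * a)
    (kp km : ℂ)
    (hkp : kp = (Real.sqrt (1 + 3 * κ ^ 2 / 4) : ℂ) - I * κ / 2)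
    (hkm : km = -(Real.sqrt (1 + 3 * κ ^ 2 / 4) : ℂ) - I * κ / 2)
    (T : ℂ → ℂ)
    (hT : ∀ k : ℂ, T k = (k ^ 3 - k) / ((k + I * κ) * (k - km) * (k - kp))) :
    T 1 = 0 ∧ ‖deriv T 1‖ = 1 / a := by
  have hs : ((Real.sqrt (1 + 3 * κ ^ 2 / 4) : ℝ) : ℂ) ^ 2 = 1 + 3 * (κ : ℂ) ^ 2 / 4 := by
    exact_mod_cast Real.sq_sqrt (by positivity)
  have hD1 : (1 + I * κ) * (1 - km) * (1 - kp) = I * κ * (1 + I * κ) ^ 2 := by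
    rw [mul_assoc, hkm, hkp, sub_mul_sub_eq_of_sq_eq _ _ _ hs]
    linear_combination (-(κ : ℂ) ^ 2 - I * κ ^ 3) * I_sq
  have hD1_ne : I * κ * (1 + I * κ) ^ 2 ≠ 0 := by
    rw [← norm_ne_zero_iff, norm_I_mul_mul_one_add_I_mul_sq, abs_of_pos hκ]
    positivity
  have hT' : HasDerivAt T (2 / (I * κ * (1 + I * κ) ^ 2)) 1 := by
    have hN : HasDerivAt (fun k : ℂ => k ^ 3 - k) 2 1 := by
      have h : HasDerivAt (fun k : ℂ => k ^ 3 - k) (3 * 1 ^ 2 - 1) 1 :=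
        (hasDerivAt_pow 3 1).sub (hasDerivAt_id 1)
      norm_num at h
      exact h
    rw [funext hT, ← hD1]
    exact hN.div_of_apply_eq_zero (by fun_prop) (by norm_num) (hD1 ▸ hD1_ne)
  refine ⟨by simp [hT], ?_⟩
  rw [hT'.deriv, norm_div, norm_I_mul_mul_one_add_I_mul_sq, abs_of_pos hκ, norm_ofNat,
    show κ * (1 + κ ^ 2) = 2 * a by linear_combination hrel]
  ring

/-- `T(1) = 0` and `|T'(1)| = 1/a` for the transmission coefficient. -/
theorem transmission_zero_and_derivative (a κ : ℝ) (ha : 0 < a) (hκ : 0 < κ)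
    (hrel : κ ^ 3 + κ = 2 * a)
    (kp km : ℂ)
    (hkp : kp = (Real.sqrt (1 + 3 * κ ^ 2 / 4) : ℂ) - I * κ / 2)
    (hkm : km = -(Real.sqrt (1 + 3 * κ ^ 2 / 4) : ℂ) - I * κ / 2)
    (T : ℂ → ℂ)
    (hT : ∀ k : ℂ, T k = (k ^ 3 - k) / ((k + I * κ) * (k - km) * (k - kp))) :
    T 1 = 0 ∧ ‖deriv T 1‖ = 1 / a :=
  transmission_zero_and_derivative_general a κ hκ hrel kp km hkp hkm T hT
end

section
/- For a > 0 and κ > 0 with κ³ + κ = 2a, the transmission and reflection coefficients T(k) = (k³-k)/((k+iκ)(k-k₋)(k-k₊)) and R(k) = i(κ³+κ)/((k+iκ)(k-k₋)(k-k₊)) satisfy |T(k)|² + |R(k)|² = 1 for all real k. -/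
/-!
Since `k₊ + k₋ = -iκ` and `k₊ k₋ = -(1 + κ²)`, the common denominator of `T` and `R` is
`D(k) = (k + iκ)(k² + iκk - (1 + κ²))`, and a direct expansion shows
`|D(k)|² = (k³ - k)² + (κ³ + κ)²` for real `k`: the squared moduli of the two numerators add up
to that of the denominator, which in particular cannot vanish when `κ ≠ 0`.
-/

open Complex

theorem sq_norm_div_add_sq_norm_div_eq_one {𝕜 : Type*} [NormedDivisionRing 𝕜] {x y d : 𝕜}
    (h : ‖d‖ ^ 2 = ‖x‖ ^ 2 + ‖y‖ ^ 2) (hy : y ≠ 0) :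
    ‖x / d‖ ^ 2 + ‖y / d‖ ^ 2 = 1 := by
  have hd : ‖d‖ ^ 2 ≠ 0 := by
    rw [h]
    positivity
  rw [norm_div, norm_div, div_pow, div_pow, ← add_div, ← h, div_self hd]

theorem sub_neg_root_mul_sub_root {κ s : ℝ} (hs : s ^ 2 = 1 + 3 * κ ^ 2 / 4) (z : ℂ) :
    (z - (-(s : ℂ) - I * κ / 2)) * (z - ((s : ℂ) - I * κ / 2)) =
      z ^ 2 + I * κ * z - (1 + (κ : ℂ) ^ 2) := by
  have hs' : (s : ℂ) ^ 2 = 1 + 3 * (κ : ℂ) ^ 2 / 4 := by exact_mod_cast hs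
  linear_combination (-1 : ℂ) * hs' + (κ : ℂ) ^ 2 / 4 * I_sq

theorem sq_norm_scattering_denominator (κ k : ℝ) :
    ‖((k : ℂ) + I * κ) * ((k : ℂ) ^ 2 + I * κ * k - (1 + (κ : ℂ) ^ 2))‖ ^ 2 =
      ‖(k : ℂ) ^ 3 - k‖ ^ 2 + ‖I * ((κ : ℂ) ^ 3 + κ)‖ ^ 2 := by
  simp only [Complex.sq_norm, normSq_apply]
  simp only [pow_succ, pow_zero, mul_re, mul_im, add_re, add_im, sub_re, sub_im, ofReal_re,
    ofReal_im, I_re, I_im, one_re, one_im]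
  ring

theorem T_R_unitarity_general (κ : ℝ) (hκ : 0 < κ)
    (kp km : ℂ)
    (hkp : kp = (Real.sqrt (1 + 3 * κ ^ 2 / 4) : ℂ) - I * κ / 2)
    (hkm : km = -(Real.sqrt (1 + 3 * κ ^ 2 / 4) : ℂ) - I * κ / 2)
    (T R : ℝ → ℂ)
    (hT : ∀ k : ℝ, T k =
      ((k : ℂ) ^ 3 - k) / (((k : ℂ) + I * κ) * ((k : ℂ) - km) * ((k : ℂ) - kp)))
    (hR : ∀ k : ℝ, R k =
      I * ((κ : ℂ) ^ 3 + κ) / (((k : ℂ) + I * κ) * ((k : ℂ) - km) * ((k : ℂ) - kp))) :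
    ∀ k : ℝ, ‖T k‖ ^ 2 + ‖R k‖ ^ 2 = 1 := by
  intro k
  have hs : Real.sqrt (1 + 3 * κ ^ 2 / 4) ^ 2 = 1 + 3 * κ ^ 2 / 4 :=
    Real.sq_sqrt (by positivity)
  have hnum : I * ((κ : ℂ) ^ 3 + κ) ≠ 0 :=
    mul_ne_zero I_ne_zero (by exact_mod_cast (by positivity : κ ^ 3 + κ ≠ 0))
  rw [hT, hR]
  refine sq_norm_div_add_sq_norm_div_eq_one ?_ hnum
  rw [mul_assoc, hkm, hkp, sub_neg_root_mul_sub_root hs, sq_norm_scattering_denominator]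

/-- Unitarity `|T(k)|² + |R(k)|² = 1` for all real `k`. -/
theorem T_R_unitarity (a κ : ℝ) (ha : 0 < a) (hκ : 0 < κ)
    (hrel : κ ^ 3 + κ = 2 * a)
    (kp km : ℂ)
    (hkp : kp = (Real.sqrt (1 + 3 * κ ^ 2 / 4) : ℂ) - I * κ / 2)
    (hkm : km = -(Real.sqrt (1 + 3 * κ ^ 2 / 4) : ℂ) - I * κ / 2)
    (T R : ℝ → ℂ)
    (hT : ∀ k : ℝ, T k =
      ((k : ℂ) ^ 3 - k) / (((k : ℂ) + I * κ) * ((k : ℂ) - km) * ((k : ℂ) - kp)))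
    (hR : ∀ k : ℝ, R k =
      I * ((κ : ℂ) ^ 3 + κ) / (((k : ℂ) + I * κ) * ((k : ℂ) - km) * ((k : ℂ) - kp))) :
    ∀ k : ℝ, ‖T k‖ ^ 2 + ‖R k‖ ^ 2 = 1 :=
  T_R_unitarity_general κ hκ kp km hkp hkm T R hT hR
end
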